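/- For every x ∈ 𝔤 and every w ∈ W, the commutator of operators [f_x, M_w] equals M_{x·w}, where for w = Σ_α c_α e_α ∈ W, M_w denotes the operator of multiplication by the linear polynomial Σ_α c_α X_α. -/

import Mathlib

/-!
Since `[D_α, M_δ] = δ_{αδ}` and multiplication operators commute, `[M_γ D_α, M_δ] = δ_{αδ} M_γ`.
The reordered term `D_α M_α = M_α D_α + 1` differs from the normally ordered one by a central
element, so every `N(γ,α)` obeys the same relation whatever `J` is. Bilinearity of the commutator
then gives `[f_x, M_δ] = Σ_γ x_γ^δ M_γ`, and expanding `w` in the basis turns the coefficients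
`Σ_δ w_δ x_γ^δ` into those of `x·w`.
-/

open scoped Classical

/-- Multiplication by the variable `X γ` on the bosonic Fock space `K[X_α : α ∈ I]`. -/
noncomputable def Mop (K : Type*) [CommSemiring K] {I : Type*} (γ : I) :
    Module.End K (MvPolynomial I K) :=
  LinearMap.mulLeft K (MvPolynomial.X γ)

/-- The partial derivative `∂/∂X_α` on the bosonic Fock space `K[X_α : α ∈ I]`. -/
noncomputable def Dop (K : Type*) [CommSemiring K] {I : Type*} (α : I) :
    Module.End K (MvPolynomial I K) :=
  (MvPolynomial.pderiv α).toLinearMap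

/-- The normally ordered quadratic piece `N(γ,α)`. -/
noncomputable def Nop (K : Type*) [CommSemiring K] {I : Type*} (J : Set I) (γ α : I) :
    Module.End K (MvPolynomial I K) :=
  if γ = α ∧ α ∈ J then Dop K α ∘ₗ Mop K α else Mop K γ ∘ₗ Dop K α

/-- The normally ordered quadratic operator
`f_x = Σ_{α,γ∈I} x_γ^α N(γ,α)` on bosonic Fock space, where
`x_γ^α = (b.repr ⁅x, b α⁆) γ` are the matrix coefficients of `x` on `W`. -/
noncomputable def fock {K : Type*} [Field K] {L : Type*} [LieRing L] [LieAlgebra K L]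
    {W : Type*} [AddCommGroup W] [Module K W] [LieRingModule L W] [LieModule K L W]
    {I : Type*} [Fintype I] (b : Module.Basis I K W) (J : Set I) (x : L) :
    Module.End K (MvPolynomial I K) :=
  ∑ α : I, ∑ γ : I, b.repr ⁅x, b α⁆ γ • Nop K J γ α

section Commutator

theorem Ring.sum_lie {A ι : Type*} [Ring A] (s : Finset ι) (f : ι → A) (b : A) :
    ⁅∑ i ∈ s, f i, b⁆ = ∑ i ∈ s, ⁅f i, b⁆ := by
  simp only [Ring.lie_def, Finset.sum_mul, Finset.mul_sum, Finset.sum_sub_distrib]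

theorem Ring.lie_sum {A ι : Type*} [Ring A] (s : Finset ι) (a : A) (f : ι → A) :
    ⁅a, ∑ i ∈ s, f i⁆ = ∑ i ∈ s, ⁅a, f i⁆ := by
  simp only [Ring.lie_def, Finset.sum_mul, Finset.mul_sum, Finset.sum_sub_distrib]

variable {R M : Type*} [CommSemiring R] [AddCommGroup M] [Module R M]

-- Stated for `Module.End` only: a version for arbitrary algebras does not unify with the scalar
-- action on `Module.End` at reducible transparency, so `rw`/`simp` could not use it here.
theorem Module.End.smul_lie (c : R) (f g : Module.End R M) : ⁅c • f, g⁆ = c • ⁅f, g⁆ := by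
  rw [Ring.lie_def, Ring.lie_def, smul_mul_assoc, mul_smul_comm, smul_sub]

theorem Module.End.lie_smul (c : R) (f g : Module.End R M) : ⁅f, c • g⁆ = c • ⁅f, g⁆ := by
  rw [Ring.lie_def, Ring.lie_def, smul_mul_assoc, mul_smul_comm, smul_sub]

end Commutator

section FockSpace

variable (K : Type*) [CommRing K] {I : Type*}

theorem lie_Dop_Mop (α δ : I) :
    ⁅Dop K α, Mop K δ⁆ = if α = δ then (1 : Module.End K (MvPolynomial I K)) else 0 := by
  refine LinearMap.ext fun p => ?_
  simp only [Ring.lie_def, LinearMap.sub_apply, Module.End.mul_apply, Dop, Mop,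
    LinearMap.mulLeft_apply, Derivation.coeFn_coe, MvPolynomial.pderiv_mul,
    MvPolynomial.pderiv_X, Pi.single_apply]
  rcases eq_or_ne α δ with rfl | h
  · simp
  · simp [h, h.symm]

theorem commute_Mop (γ δ : I) : Commute (Mop K γ) (Mop K δ) :=
  LinearMap.ext fun p => by
    simp only [Module.End.mul_apply, Mop, LinearMap.mulLeft_apply]
    ring

theorem Dop_mul_Mop_self (α : I) : Dop K α * Mop K α = Mop K α * Dop K α + 1 := by
  rw [← sub_eq_iff_eq_add', ← Ring.lie_def, lie_Dop_Mop, if_pos rfl]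

theorem lie_Mop_mul_Dop_Mop (γ α δ : I) :
    ⁅Mop K γ * Dop K α, Mop K δ⁆ = if α = δ then Mop K γ else 0 := by
  rw [Ring.lie_def, mul_assoc, (commute_Mop K δ γ).left_comm, ← mul_sub, ← Ring.lie_def,
    lie_Dop_Mop, mul_ite, mul_one, mul_zero]

theorem lie_Nop_Mop (J : Set I) (γ α δ : I) :
    ⁅Nop K J γ α, Mop K δ⁆ = if α = δ then Mop K γ else 0 := by
  by_cases h : γ = α ∧ α ∈ J
  · rw [Nop, if_pos h]
    obtain ⟨rfl, -⟩ := h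
    rw [← Module.End.mul_eq_comp, Dop_mul_Mop_self, Ring.lie_def, add_mul, mul_add, one_mul,
      mul_one, add_sub_add_right_eq_sub, ← Ring.lie_def, lie_Mop_mul_Dop_Mop]
  · rw [Nop, if_neg h, ← Module.End.mul_eq_comp, lie_Mop_mul_Dop_Mop]

end FockSpace

theorem lie_fock_Mop {K : Type*} [Field K] {L : Type*} [LieRing L] [LieAlgebra K L]
    {W : Type*} [AddCommGroup W] [Module K W] [LieRingModule L W] [LieModule K L W]
    {I : Type*} [Fintype I] (b : Module.Basis I K W) (J : Set I) (x : L) (δ : I) :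
    ⁅fock b J x, Mop K δ⁆ = ∑ γ, b.repr ⁅x, b δ⁆ γ • Mop K γ := by
  simp only [fock, Ring.sum_lie, Module.End.smul_lie, lie_Nop_Mop, smul_ite, smul_zero]
  rw [Finset.sum_comm]
  simp only [Finset.sum_ite_eq', Finset.mem_univ, if_true]

theorem mulLeft_sum_smul_X {K : Type*} [CommSemiring K] {I : Type*} [Fintype I] (c : I → K) :
    LinearMap.mulLeft K (∑ α, c α • MvPolynomial.X α : MvPolynomial I K) = ∑ α, c α • Mop K α := by
  refine LinearMap.ext fun p => ?_
  simp [Mop, Finset.sum_mul]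

theorem stmt3_general (K : Type*) [Field K]
    (L : Type*) [LieRing L] [LieAlgebra K L]
    (W : Type*) [AddCommGroup W] [Module K W] [LieRingModule L W] [LieModule K L W]
    (I : Type*) [Fintype I] (b : Module.Basis I K W) (J : Set I)
    (x : L) (w : W) :
    ⁅fock b J x, LinearMap.mulLeft K (∑ α : I, b.repr w α • MvPolynomial.X α : MvPolynomial I K)⁆
      = LinearMap.mulLeft K (∑ α : I, b.repr ⁅x, w⁆ α • MvPolynomial.X α : MvPolynomial I K) := by
  have repr_lie (γ : I) : b.repr ⁅x, w⁆ γ = ∑ δ, b.repr w δ * b.repr ⁅x, b δ⁆ γ := by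
    simpa [Matrix.mulVec, dotProduct, LinearMap.toMatrix_apply, mul_comm] using
      (congr_fun (LinearMap.toMatrix_mulVec_repr b b (LieModule.toEnd K L W x) w) γ).symm
  rw [mulLeft_sum_smul_X, mulLeft_sum_smul_X, Ring.lie_sum]
  simp only [Module.End.lie_smul, lie_fock_Mop, repr_lie, Finset.smul_sum, Finset.sum_smul, smul_smul]
  exact Finset.sum_comm

/-- for every `x ∈ 𝔤` and `w ∈ W`, the commutator of operators
`[f_x, M_w]` equals `M_{x·w}`, where `M_w` is multiplication by the linear
polynomial `Σ_α c_α X_α` for `w = Σ_α c_α e_α`. -/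
theorem stmt3 (K : Type*) [Field K] [CharZero K]
    (L : Type*) [LieRing L] [LieAlgebra K L]
    (W : Type*) [AddCommGroup W] [Module K W] [LieRingModule L W] [LieModule K L W]
    (I : Type*) [Fintype I] (b : Module.Basis I K W) (J : Set I)
    (x : L) (w : W) :
    ⁅fock b J x, LinearMap.mulLeft K (∑ α : I, b.repr w α • MvPolynomial.X α : MvPolynomial I K)⁆
      = LinearMap.mulLeft K (∑ α : I, b.repr ⁅x, w⁆ α • MvPolynomial.X α : MvPolynomial I K) :=
  stmt3_general K L W I b J x w
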